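/- Let G be an RDF graph over nodes V and labels Σ, let e be a property path, and assume u is a term of G. Then for every node v, the pair (u,v) belongs to ⟦e⟧_G if and only if there exists a word w ∈ L(e) over the signed alphabet Σ± and a w-labeled path from u to v in G. -/

import Mathlib

/-!
Both sides are compositional in `e`. The relation "joined by a path labelled by a word of `L`"
turns `winv`, product, sum and Kleene star of languages into converse, composition, union and
reflexive-transitive closure, matching the clauses of `sem`, except on the diagonal: the empty
word labels a path from every node to itself, whereas `⟦e*⟧` and `⟦e?⟧` add `(x, x)` only for
terms `x`. Being a term propagates along paths, so from a term `u` the two relations agree.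
-/

/-- Letters of the signed alphabet `Σ± = Σ ∪ {a⁻ | a ∈ Σ}`. -/
inductive Signed (σ : Type*) where
  | pos (a : σ)
  | neg (a : σ)

/-- Flip the sign of a signed letter. -/
def Signed.flip {σ : Type*} : Signed σ → Signed σ
  | .pos a => .neg a
  | .neg a => .pos a

/-- `inv w`: reverse the word and flip every letter. -/
def winv {σ : Type*} (w : List (Signed σ)) : List (Signed σ) :=
  (w.map Signed.flip).reverse

/-- `Step G ℓ x y` means `G ⊢ x →ℓ y`. An RDF graph is a finite set of triples. -/
def Step {V σ : Type*} (G : Finset (V × σ × V)) : Signed σ → V → V → Prop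
  | .pos a, x, y => (x, a, y) ∈ G
  | .neg a, x, y => (y, a, x) ∈ G

/-- A `w`-labeled path from `x` to `y` in `G`. -/
inductive LabPath {V σ : Type*} (G : Finset (V × σ × V)) : V → List (Signed σ) → V → Prop
  | nil (x : V) : LabPath G x [] x
  | cons {x y z : V} {ℓ : Signed σ} {w : List (Signed σ)} :
      Step G ℓ x y → LabPath G y w z → LabPath G x (ℓ :: w) z

/-- A term of `G`: a node occurring as subject or object of a triple of `G`. -/
def IsTerm {V σ : Type*} (G : Finset (V × σ × V)) (x : V) : Prop :=
  ∃ p y, (x, p, y) ∈ G ∨ (y, p, x) ∈ G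

/-- Property paths `e ::= a | e⁻ | e₁·e₂ | e₁+e₂ | e* | e?`. -/
inductive PP (σ : Type*) where
  | base (a : σ)
  | inv (e : PP σ)
  | comp (e₁ e₂ : PP σ)
  | alt (e₁ e₂ : PP σ)
  | star (e : PP σ)
  | opt (e : PP σ)

/-- `relPow r n` is the `(n+1)`-fold relational composition of `r`. -/
def relPow {V : Type*} (r : V → V → Prop) : ℕ → V → V → Prop
  | 0 => r
  | n + 1 => Relation.Comp r (relPow r n)

/-- The semantics `⟦e⟧_G` of a property path over an RDF graph. -/
def sem {V σ : Type*} (G : Finset (V × σ × V)) : PP σ → V → V → Prop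
  | .base a => fun x y => (x, a, y) ∈ G
  | .inv e => fun x y => sem G e y x
  | .comp e₁ e₂ => Relation.Comp (sem G e₁) (sem G e₂)
  | .alt e₁ e₂ => fun x y => sem G e₁ x y ∨ sem G e₂ x y
  | .star e => fun x y => (∃ n, relPow (sem G e) n x y) ∨ (x = y ∧ IsTerm G x)
  | .opt e => fun x y => sem G e x y ∨ (x = y ∧ IsTerm G x)

/-- The language `L(e) ⊆ (Σ±)*` of a property path. -/
def lang {σ : Type*} : PP σ → Language (Signed σ)
  | .base a => {[Signed.pos a]}
  | .inv e => winv '' lang e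
  | .comp e₁ e₂ => lang e₁ * lang e₂
  | .alt e₁ e₂ => lang e₁ + lang e₂
  | .star e => KStar.kstar (lang e)
  | .opt e => lang e + 1

/-- A run of an NFA with transition relation `δ` on a word. -/
inductive NFARun {σ Q : Type*} (δ : Q → Signed σ → Q → Prop) :
    Q → List (Signed σ) → Q → Prop
  | nil (q : Q) : NFARun δ q [] q
  | cons {q q' q'' : Q} {ℓ : Signed σ} {w : List (Signed σ)} :
      δ q ℓ q' → NFARun δ q' w q'' → NFARun δ q (ℓ :: w) q''

/-- The language `L(A)` of the NFA `(Q, Σ±, q0, F, δ)`. -/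
def nfaLang {σ Q : Type*} (δ : Q → Signed σ → Q → Prop) (q0 : Q) (F : Set Q) :
    Language (Signed σ) :=
  {w | ∃ qf ∈ F, NFARun δ q0 w qf}

/-- Edge relation of the product graph `G × A`. -/
def ProdEdge {V σ Q : Type*} (G : Finset (V × σ × V)) (δ : Q → Signed σ → Q → Prop) :
    V × Q → V × Q → Prop :=
  fun p p' => ∃ ℓ, Step G ℓ p.1 p'.1 ∧ δ p.2 ℓ p'.2

/-- Edge relation of the transition graph of the NFA. -/
def TransEdge {σ Q : Type*} (δ : Q → Signed σ → Q → Prop) : Q → Q → Prop :=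
  fun q q' => ∃ ℓ, δ q ℓ q'

/-- `NSteps r n a b`: there is a directed path with exactly `n` edges from `a` to `b`. -/
def NSteps {α : Type*} (r : α → α → Prop) : ℕ → α → α → Prop
  | 0 => fun a b => a = b
  | n + 1 => fun a c => ∃ b, r a b ∧ NSteps r n b c

/-- Distance (in `ℕ∞`) from a node to a set of nodes in a directed graph. -/
noncomputable def distToSet {α : Type*} (r : α → α → Prop) (S : Set α) (a : α) : ℕ∞ :=
  ⨅ (n : ℕ) (_ : ∃ b ∈ S, NSteps r n a b), (n : ℕ∞)

theorem Signed.flip_involutive {σ : Type*} : Function.Involutive (Signed.flip (σ := σ)) := by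
  intro ℓ
  cases ℓ <;> rfl

theorem winv_winv {σ : Type*} (w : List (Signed σ)) : winv (winv w) = w := by
  simp only [winv, List.map_reverse, List.reverse_reverse, List.map_map,
    Signed.flip_involutive.comp_self, List.map_id]

theorem relPow_imp_of_invariant {V : Type*} {r s : V → V → Prop} {P : V → Prop}
    (hrs : ∀ x y, P x → r x y → s x y) (hP : ∀ x y, P x → r x y → P y) :
    ∀ n x y, P x → relPow r n x y → relPow s n x y
  | 0, x, y, hx, h => hrs x y hx h
  | n + 1, x, _, hx, ⟨m, hxm, hm⟩ =>
    ⟨m, hrs x m hx hxm, relPow_imp_of_invariant hrs hP n m _ (hP x m hx hxm) hm⟩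

theorem relPow_mono {V : Type*} {r s : V → V → Prop} (hrs : ∀ x y, r x y → s x y) (n : ℕ)
    {x y : V} : relPow r n x y → relPow s n x y :=
  relPow_imp_of_invariant (P := fun _ => True) (fun x y _ => hrs x y) (fun _ _ _ _ => trivial)
    n x y trivial

section Paths

open scoped Computability

variable {V σ : Type*} {G : Finset (V × σ × V)}

theorem Step.flip {ℓ : Signed σ} {x y : V} (h : Step G ℓ x y) : Step G ℓ.flip y x := by
  cases ℓ <;> exact h

theorem Step.isTerm {ℓ : Signed σ} {x y : V} (h : Step G ℓ x y) : IsTerm G x ∧ IsTerm G y := by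
  cases ℓ with
  | pos a => exact ⟨⟨a, y, .inl h⟩, ⟨a, x, .inr h⟩⟩
  | neg a => exact ⟨⟨a, y, .inr h⟩, ⟨a, x, .inl h⟩⟩

namespace LabPath

theorem append {x y z : V} {w₁ w₂ : List (Signed σ)}
    (h₁ : LabPath G x w₁ y) (h₂ : LabPath G y w₂ z) : LabPath G x (w₁ ++ w₂) z := by
  induction h₁ with
  | nil => exact h₂
  | cons s _ ih => exact .cons s (ih h₂)

theorem exists_of_append {x z : V} {w₁ w₂ : List (Signed σ)}
    (h : LabPath G x (w₁ ++ w₂) z) : ∃ y, LabPath G x w₁ y ∧ LabPath G y w₂ z := by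
  induction w₁ generalizing x with
  | nil => exact ⟨x, .nil x, h⟩
  | cons ℓ w₁ ih =>
    obtain _ | ⟨s, p⟩ := h
    obtain ⟨y, p₁, p₂⟩ := ih p
    exact ⟨y, .cons s p₁, p₂⟩

theorem reverse {x y : V} {w : List (Signed σ)} (h : LabPath G x w y) :
    LabPath G y (winv w) x := by
  induction h with
  | nil x => exact .nil x
  | cons s _ ih =>
    simpa [winv] using ih.append (.cons s.flip (.nil _))

theorem eq_or_isTerm {x y : V} {w : List (Signed σ)} (h : LabPath G x w y) :
    x = y ∨ IsTerm G x ∧ IsTerm G y := by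
  induction h with
  | nil => exact .inl rfl
  | cons s _ ih =>
    refine .inr ⟨s.isTerm.1, ?_⟩
    rcases ih with rfl | ⟨_, hz⟩
    exacts [s.isTerm.2, hz]

theorem isTerm_right {x y : V} {w : List (Signed σ)} (h : LabPath G x w y) (hx : IsTerm G x) :
    IsTerm G y := by
  rcases h.eq_or_isTerm with rfl | ⟨_, hy⟩
  exacts [hx, hy]

theorem isTerm_left {x y : V} {w : List (Signed σ)} (h : LabPath G x w y) (hy : IsTerm G y) :
    IsTerm G x := by
  rcases h.eq_or_isTerm with rfl | ⟨hx, _⟩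
  exacts [hy, hx]

end LabPath

def langRel (G : Finset (V × σ × V)) (L : Language (Signed σ)) (x y : V) : Prop :=
  ∃ w ∈ L, LabPath G x w y

variable {L L₁ L₂ : Language (Signed σ)} {x y : V}

theorem langRel_singleton {ℓ : Signed σ} : langRel G {[ℓ]} x y ↔ Step G ℓ x y := by
  constructor
  · rintro ⟨_, rfl, p⟩
    obtain _ | ⟨s, _ | _⟩ := p
    exact s
  · exact fun s => ⟨[ℓ], rfl, .cons s (.nil y)⟩

theorem langRel_one : langRel G 1 x y ↔ x = y := by
  constructor
  · rintro ⟨_, rfl, _ | _⟩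
    rfl
  · rintro rfl
    exact ⟨[], rfl, .nil x⟩

theorem langRel_add : langRel G (L₁ + L₂) x y ↔ langRel G L₁ x y ∨ langRel G L₂ x y := by
  simp only [langRel, Language.mem_add, or_and_right, exists_or]

theorem langRel_mul :
    langRel G (L₁ * L₂) x y ↔ Relation.Comp (langRel G L₁) (langRel G L₂) x y := by
  constructor
  · rintro ⟨_, hw, p⟩
    obtain ⟨w₁, hw₁, w₂, hw₂, rfl⟩ := Language.mem_mul.1 hw
    obtain ⟨m, p₁, p₂⟩ := p.exists_of_append
    exact ⟨m, ⟨w₁, hw₁, p₁⟩, ⟨w₂, hw₂, p₂⟩⟩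
  · rintro ⟨m, ⟨w₁, hw₁, p₁⟩, ⟨w₂, hw₂, p₂⟩⟩
    exact ⟨w₁ ++ w₂, Language.append_mem_mul hw₁ hw₂, p₁.append p₂⟩

theorem langRel_image_winv : langRel G (winv '' L) x y ↔ langRel G L y x := by
  constructor
  · rintro ⟨_, ⟨w, hw, rfl⟩, p⟩
    exact ⟨w, hw, winv_winv w ▸ p.reverse⟩
  · rintro ⟨w, hw, p⟩
    exact ⟨winv w, ⟨w, hw, rfl⟩, p.reverse⟩

theorem langRel_kstar_of_comp (h : Relation.Comp (langRel G L) (langRel G L∗) x y) :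
    langRel G L∗ x y := by
  rw [← Language.one_add_self_mul_kstar_eq_kstar, langRel_add, langRel_mul]
  exact .inr h

theorem langRel_kstar :
    langRel G L∗ x y ↔ (∃ n, relPow (langRel G L) n x y) ∨ x = y := by
  constructor
  · rintro ⟨_, hw, p⟩
    obtain ⟨S, rfl, hS⟩ := Language.mem_kstar.1 hw
    clear hw
    induction S generalizing x with
    | nil => exact .inr (langRel_one.1 ⟨[], rfl, p⟩)
    | cons w S ih =>
      obtain ⟨m, p₁, p₂⟩ := p.exists_of_append
      have hxm : langRel G L x m := ⟨w, hS w (by simp), p₁⟩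
      rcases ih (fun v hv => hS v (by simp [hv])) p₂ with ⟨n, hn⟩ | rfl
      exacts [.inl ⟨n + 1, m, hxm, hn⟩, .inl ⟨0, hxm⟩]
  · rintro (⟨n, hn⟩ | rfl)
    · induction n generalizing x with
      | zero => exact langRel_kstar_of_comp ⟨y, hn, [], Language.nil_mem_kstar L, .nil y⟩
      | succ n ih =>
        obtain ⟨m, hxm, hm⟩ := hn
        exact langRel_kstar_of_comp ⟨m, hxm, ih hm⟩
    · exact ⟨[], Language.nil_mem_kstar L, .nil x⟩

theorem langRel_lang_of_sem {e : PP σ} : ∀ {x y : V}, sem G e x y → langRel G (lang e) x y := by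
  induction e with
  | base a => exact fun h => langRel_singleton.2 h
  | inv e ih => exact fun h => langRel_image_winv.2 (ih h)
  | comp e₁ e₂ ih₁ ih₂ => exact fun ⟨m, h₁, h₂⟩ => langRel_mul.2 ⟨m, ih₁ h₁, ih₂ h₂⟩
  | alt e₁ e₂ ih₁ ih₂ => exact fun h => langRel_add.2 (h.imp ih₁ ih₂)
  | star e ih =>
    exact fun h => langRel_kstar.2 (h.imp (fun ⟨n, hn⟩ => ⟨n, relPow_mono (fun _ _ => ih) n hn⟩)
      And.left)
  | opt e ih => exact fun h => langRel_add.2 (h.imp ih fun h => langRel_one.2 h.1)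

theorem sem_of_langRel_lang {e : PP σ} :
    ∀ {x y : V}, IsTerm G x → langRel G (lang e) x y → sem G e x y := by
  induction e with
  | base a => exact fun _ h => langRel_singleton.1 h
  | inv e ih =>
    intro x y hx h
    obtain ⟨w, hw, p⟩ := langRel_image_winv.1 h
    exact ih (p.isTerm_left hx) ⟨w, hw, p⟩
  | comp e₁ e₂ ih₁ ih₂ =>
    intro x y hx h
    obtain ⟨m, ⟨w, hw, p⟩, hmy⟩ := langRel_mul.1 h
    exact ⟨m, ih₁ hx ⟨w, hw, p⟩, ih₂ (p.isTerm_right hx) hmy⟩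
  | alt e₁ e₂ ih₁ ih₂ => exact fun hx h => (langRel_add.1 h).imp (ih₁ hx) (ih₂ hx)
  | star e ih =>
    refine fun hx h => (langRel_kstar.1 h).imp (fun ⟨n, hn⟩ => ⟨n, ?_⟩) (⟨·, hx⟩)
    exact relPow_imp_of_invariant (fun _ _ => ih) (fun _ _ hx ⟨_, _, p⟩ => p.isTerm_right hx)
      n _ _ hx hn
  | opt e ih => exact fun hx h => (langRel_add.1 h).imp (ih hx) fun h => ⟨langRel_one.1 h, hx⟩

end Paths

/-- `(u,v) ∈ ⟦e⟧_G` iff there is a word `w ∈ L(e)` and a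
`w`-labeled path from `u` to `v` in `G`, provided `u` is a term of `G`. -/
theorem stmt1 {V σ : Type*} (G : Finset (V × σ × V)) (e : PP σ)
    (u : V) (hu : IsTerm G u) :
    ∀ v : V, sem G e u v ↔ ∃ w ∈ lang e, LabPath G u w v :=
  fun _ => ⟨langRel_lang_of_sem, sem_of_langRel_lang hu⟩
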